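/- Let H be a signed-acyclic signed hypergraph and x a signed-leaf of H with pivot hyperedge R_x. Let S_x = {K ∈ E⁺ ∪ E⁻ : K ≠ R_x, K ⊆ R_x}. Then the signed hypergraph obtained from H by deleting all hyperedges in S_x and then removing the vertex x is also signed-acyclic. -/

import Mathlib

variable {V : Type*}

/-- A join tree of a hypergraph with hyperedge collection `E`: a tree (acyclic,
preconnected graph) on the hyperedges such that for every vertex `v`, the set of
nodes whose hyperedges contain `v` induces a connected (preconnected) subgraph. -/
def IsJoinTree (E : Set (Set V)) (T : SimpleGraph E) : Prop :=
  T.IsAcyclic ∧ T.Preconnected ∧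
    ∀ v : V, (T.induce {K : ↥E | v ∈ (K : Set V)}).Preconnected

/-- A hypergraph is α-acyclic if it admits a join tree. -/
def AlphaAcyclic (E : Set (Set V)) : Prop :=
  ∃ T : SimpleGraph E, IsJoinTree E T

/-- Remove a vertex from every hyperedge, discarding emptied hyperedges. -/
def removeVertex (E : Set (Set V)) (x : V) : Set (Set V) :=
  {K' | ∃ K ∈ E, K' = K \ {x} ∧ K' ≠ ∅}

/-- A signed hypergraph `(V, E⁺, E⁻)` is signed-acyclic if for every `S ⊆ E⁻`,
the hypergraph `(V, E⁺ ∪ S)` is α-acyclic. -/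
def SignedAcyclic (Ep En : Set (Set V)) : Prop :=
  ∀ S ⊆ En, AlphaAcyclic (Ep ∪ S)

/-- `Rx` is a pivot hyperedge witnessing that `x` is a signed-leaf of `(V, E⁺, E⁻)`:
`Rx` is a positive hyperedge containing `x`, every positive hyperedge containing `x`
is included in `Rx`, and `{N ∈ E⁻ | x ∈ N, N ⊄ Rx} ∪ {Rx}` is a chain under
inclusion with `Rx` as its minimal element. -/
def IsPivot (Ep En : Set (Set V)) (x : V) (Rx : Set V) : Prop :=
  Rx ∈ Ep ∧ x ∈ Rx ∧ (∀ R ∈ Ep, x ∈ R → R ⊆ Rx) ∧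
    IsChain (· ⊆ ·) ({N | N ∈ En ∧ x ∈ N ∧ ¬ N ⊆ Rx} ∪ {Rx}) ∧
    ∀ N ∈ ({N | N ∈ En ∧ x ∈ N ∧ ¬ N ⊆ Rx} ∪ {Rx} : Set (Set V)), Rx ⊆ N

/-- `x` is a signed-leaf of `(V, E⁺, E⁻)`. -/
def IsSignedLeaf (Ep En : Set (Set V)) (x : V) : Prop :=
  ∃ Rx, IsPivot Ep En x Rx

/-- The set `S_x` of hyperedges (other than the pivot `Rx`) included in the pivot. -/
def leafSx (Ep En : Set (Set V)) (Rx : Set V) : Set (Set V) :=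
  {K | K ∈ Ep ∪ En ∧ K ≠ Rx ∧ K ⊆ Rx}

/-- Positive hyperedges after removing the signed-leaf `x` with pivot `Rx`:
delete all hyperedges in `S_x`, then remove the vertex `x`. -/
def removeLeafPos (Ep En : Set (Set V)) (x : V) (Rx : Set V) : Set (Set V) :=
  removeVertex (Ep \ leafSx Ep En Rx) x

/-- Negative hyperedges after removing the signed-leaf `x` with pivot `Rx`. -/
def removeLeafNeg (Ep En : Set (Set V)) (x : V) (Rx : Set V) : Set (Set V) :=
  removeVertex (En \ leafSx Ep En Rx) x

/-!
Lift each negative hyperedge of the reduced hypergraph to one of `E⁻`, preferring an `x`-free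
lift; signed-acyclicity of `H` gives a join tree for `E⁺` together with these lifts. Deleting the
hyperedges inside the pivot `R_x` keeps a join tree, because `R_x` survives and contains all their
vertices. Afterwards `R_x` is the only positive hyperedge through `x`, and the choice of lifts
ensures that removing `x` identifies no two hyperedges; such a removal keeps the same tree.
-/

namespace SimpleGraph

variable {α β : Type*} {G : SimpleGraph α} {a b : α}

theorem Reachable.map_of_adj {H : SimpleGraph β} (f : α → β)
    (hf : ∀ ⦃u v⦄, G.Adj u v → f u = f v ∨ H.Adj (f u) (f v)) (h : G.Reachable a b) :
    H.Reachable (f a) (f b) := by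
  rw [reachable_iff_reflTransGen] at h ⊢
  refine h.lift' f fun u v huv => ?_
  show Relation.ReflTransGen H.Adj (f u) (f v)
  rcases hf huv with heq | hadj
  · rw [heq]
  · exact .single hadj

theorem Reachable.iff_of_adj (P : α → Prop) (hP : ∀ ⦃u v⦄, G.Adj u v → (P u ↔ P v))
    (h : G.Reachable a b) : P a ↔ P b := by
  rw [reachable_iff_reflTransGen] at h
  induction h with
  | refl => rfl
  | tail _ huv ih => exact ih.trans (hP huv)

theorem eq_or_map_adj (f : α → β) {u v : α} (h : G.Adj u v) :
    f u = f v ∨ (G.map f).Adj (f u) (f v) :=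
  (eq_or_ne _ _).imp_right fun hne => ⟨hne, u, v, h, rfl, rfl⟩

theorem Preconnected.map_of_surjective {f : α → β} (hG : G.Preconnected)
    (hf : f.Surjective) : (G.map f).Preconnected := by
  intro b c
  obtain ⟨a, rfl⟩ := hf b
  obtain ⟨a', rfl⟩ := hf c
  exact (hG a a').map_of_adj f fun _ _ => eq_or_map_adj f

/-- Each edge `f u ~ f v` of the contraction is a bridge: on which side of the bridge `u ~ v` of
`G` a vertex lies is constant on the connected fibres. -/
theorem IsAcyclic.map {f : α → β} (hG : G.IsAcyclic)
    (hf : ∀ b, (G.induce (f ⁻¹' {b})).Preconnected) : (G.map f).IsAcyclic := by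
  rw [isAcyclic_iff_forall_adj_isBridge]
  rintro _ _ ⟨hne, u, v, huv, rfl, rfl⟩
  rw [isBridge_iff]
  intro hr
  set G' := G.deleteEdges {s(u, v)}
  have hbridge : ¬ G'.Reachable u v :=
    isBridge_iff.mp (isAcyclic_iff_forall_adj_isBridge.mp hG huv)
  have hadj : ∀ s t, G.Adj s t → s(f s, f t) ≠ s(f u, f v) → G'.Adj s t := by
    refine fun s t hst hne' => (deleteEdges_adj ..).mpr ⟨hst, fun he => hne' ?_⟩
    simpa using congrArg (Sym2.map f) (Set.mem_singleton_iff.mp he)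
  have hfiber : ∀ a a', f a = f a' → (G'.Reachable u a ↔ G'.Reachable u a') := by
    intro a a' h
    have : G'.Reachable a a' := by
      refine (hf (f a) ⟨a, rfl⟩ ⟨a', h.symm⟩).map_of_adj Subtype.val fun s t hst => .inr ?_
      refine hadj s t hst fun he => hne ?_
      rw [show f t = f s from t.2.trans s.2.symm] at he
      obtain ⟨h₁, h₂⟩ | ⟨h₁, h₂⟩ := Sym2.eq_iff.mp he
      exacts [h₁.symm.trans h₂, h₂.symm.trans h₁]
    exact ⟨fun h => h.trans this, fun h => h.trans this.symm⟩
  have hside := hr.iff_of_adj (fun c => ∃ a, f a = c ∧ G'.Reachable u a) ?_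
  · obtain ⟨a, ha, hua⟩ := hside.mp ⟨u, rfl, .refl _⟩
    exact hbridge ((hfiber a v ha).mp hua)
  rintro _ _ ⟨⟨hne_st, s, t, hst, rfl, rfl⟩, hnot⟩
  have hst' : G'.Adj s t := hadj s t hst fun he => hnot (by simp [he, hne_st])
  constructor
  · rintro ⟨a, ha, hua⟩
    exact ⟨t, rfl, ((hfiber a s ha).mp hua).trans hst'.reachable⟩
  · rintro ⟨a, ha, hua⟩
    exact ⟨s, rfl, ((hfiber a t ha).mp hua).trans hst'.symm.reachable⟩

theorem IsAcyclic.support_path_subset {s : Set α} (hG : G.IsAcyclic)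
    (hs : (G.induce s).Preconnected) (ha : a ∈ s) (hb : b ∈ s) (p : G.Path a b) :
    ∀ c ∈ (p : G.Walk a b).support, c ∈ s := by
  classical
  obtain ⟨w⟩ := hs ⟨a, ha⟩ ⟨b, hb⟩
  rw [(hG.subsingleton_path a b).elim p (w.map (Embedding.induce s).toHom).toPath]
  intro c hc
  have hc' := Walk.support_map .. ▸ Walk.support_toPath_subset_support _ hc
  obtain ⟨c, -, rfl⟩ := List.mem_map.mp hc'
  exact c.2

namespace Walk

variable (D : Set α) [DecidablePred (· ∈ D)]

/-- The first vertex of the walk outside `D`; the endpoint if there is none. -/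
def firstNotMem : ∀ {a b : α}, G.Walk a b → α
  | _, b, nil => b
  | a, _, cons _ w => if a ∈ D then firstNotMem w else a

theorem firstNotMem_notMem : ∀ {a b : α} (w : G.Walk a b), b ∉ D → w.firstNotMem D ∉ D
  | _, _, nil, hb => hb
  | a, _, cons _ w, hb => by
    unfold firstNotMem
    split_ifs with ha
    exacts [w.firstNotMem_notMem hb, ha]

theorem firstNotMem_mem_support : ∀ {a b : α} (w : G.Walk a b), w.firstNotMem D ∈ w.support
  | _, _, nil => by simp [firstNotMem]
  | a, _, cons _ w => by
    by_cases ha : a ∈ D <;> simp [firstNotMem, ha, w.firstNotMem_mem_support]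

theorem firstNotMem_of_notMem (w : G.Walk a b) (ha : a ∉ D) : w.firstNotMem D = a := by
  cases w <;> simp [firstNotMem, ha]

theorem exists_walk_firstNotMem (hG : G.IsAcyclic) {r : α} (hr : r ∉ D) (w : G.Walk a r)
    (hw : w.IsPath) : ∃ ω : G.Walk a (w.firstNotMem D),
      ∀ s ∈ ω.support, ∀ q : G.Walk s r, q.IsPath → q.firstNotMem D = w.firstNotMem D := by
  induction w with
  | nil =>
    refine ⟨nil, fun s hs q _ => ?_⟩
    obtain rfl := List.mem_singleton.mp hs
    exact q.firstNotMem_of_notMem D hr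
  | @cons a m _ h w ih =>
    by_cases ha : a ∈ D
    · obtain ⟨ω, hω⟩ := ih hr hw.of_cons
      have hfirst : (cons h w).firstNotMem D = w.firstNotMem D := by simp [firstNotMem, ha]
      refine ⟨(cons h ω).copy rfl hfirst.symm, fun s hs q hq => ?_⟩
      rw [support_copy, support_cons, List.mem_cons] at hs
      rcases hs with rfl | hs
      · rw [show q = cons h w from
          congrArg Subtype.val ((hG.subsingleton_path _ _).elim ⟨q, hq⟩ ⟨_, hw⟩)]
      · rw [hω s hs q hq, hfirst]
    · rw [firstNotMem_of_notMem D _ ha]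
      refine ⟨nil, fun s hs q _ => ?_⟩
      obtain rfl := List.mem_singleton.mp hs
      exact q.firstNotMem_of_notMem D ha

end Walk

end SimpleGraph

open SimpleGraph

theorem IsJoinTree.map {E₁ E₂ : Set (Set V)} {T : SimpleGraph E₁} (hT : IsJoinTree E₁ T)
    (f : E₁ → E₂) (hfib : ∀ B, (T.induce (f ⁻¹' {B})).Preconnected)
    (hsurj : ∀ B : E₂, ∃ K, f K = B ∧ (B : Set V) ⊆ K)
    (hmem : ∀ v (K : E₁), v ∈ (K : Set V) → (∃ B : E₂, v ∈ (B : Set V)) → v ∈ (f K : Set V)) :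
    IsJoinTree E₂ (T.map f) := by
  obtain ⟨hac, hpre, hjoin⟩ := hT
  refine ⟨hac.map hfib, hpre.map_of_surjective fun B => (hsurj B).imp fun _ => And.left, ?_⟩
  rintro v ⟨B, hvB⟩ ⟨C, hvC⟩
  obtain ⟨K, rfl, hBK⟩ := hsurj B
  obtain ⟨K', rfl, hCK'⟩ := hsurj C
  exact (hjoin v ⟨K, hBK hvB⟩ ⟨K', hCK' hvC⟩).map_of_adj
    (fun A : {K : E₁ | v ∈ (K : Set V)} =>
      (⟨f A, hmem v A A.2 ⟨_, hvB⟩⟩ : {B : E₂ | v ∈ (B : Set V)}))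
    fun _ _ h => (eq_or_map_adj f h).imp_left Subtype.ext

theorem alphaAcyclic_of_subsingleton {E : Set (Set V)} (hE : E.Subsingleton) : AlphaAcyclic E :=
  have : Subsingleton E := hE.coe_sort
  ⟨⊥, isAcyclic_bot, .of_subsingleton, fun _ => .of_subsingleton⟩

/-- Each deleted node is merged into the first surviving node on its tree path to `L`. -/
theorem AlphaAcyclic.sdiff {E D : Set (Set V)} {L : Set V} (hL : L ∈ E \ D)
    (hcov : ∀ A ∈ E ∩ D, ∀ u ∈ A, (∃ B ∈ E \ D, u ∈ B) → u ∈ L) (h : AlphaAcyclic E) :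
    AlphaAcyclic (E \ D) := by
  classical
  obtain ⟨T, hT⟩ := h
  let r : E := ⟨L, hL.1⟩
  let D' : Set E := {A | (A : Set V) ∈ D}
  let P (A : E) : T.Path A r := (hT.2.1 A r).some.toPath
  let q (A : E) : E := (P A : T.Walk A r).firstNotMem D'
  have hqD (A : E) : q A ∉ D' := Walk.firstNotMem_notMem D' _ hL.2
  let p (A : E) : ↥(E \ D) := ⟨q A, (q A).2, hqD A⟩
  have hq_of_notMem (A : E) (hA : A ∉ D') : q A = A := Walk.firstNotMem_of_notMem D' _ hA
  have hp_of_notMem (B : ↥(E \ D)) : p ⟨B, B.2.1⟩ = B :=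
    Subtype.ext (congrArg (fun C : E => (C : Set V)) (hq_of_notMem ⟨B, B.2.1⟩ B.2.2))
  refine ⟨T.map p, hT.map p ?_ (fun B => ⟨_, hp_of_notMem B, subset_rfl⟩) ?_⟩
  · have hfib (B : ↥(E \ D)) (A : E) (hA : p A = B) :
        (T.induce (p ⁻¹' {B})).Reachable ⟨A, hA⟩ ⟨⟨B, B.2.1⟩, hp_of_notMem B⟩ := by
      have hqA : q A = ⟨B, B.2.1⟩ := Subtype.ext (congrArg (fun C : ↥(E \ D) => (C : Set V)) hA)
      obtain ⟨ω, hω⟩ := Walk.exists_walk_firstNotMem D' hT.1 hL.2 _ (P A).2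
      exact ⟨(ω.copy rfl hqA).induce (p ⁻¹' {B}) fun s hs => Subtype.ext <|
        congrArg (fun C : E => (C : Set V)) <| (hω s (by simpa using hs) _ (P s).2).trans hqA⟩
    rintro B ⟨A, hA⟩ ⟨A', hA'⟩
    exact (hfib B A hA).trans (hfib B A' hA').symm
  · intro v K hvK ⟨B, hvB⟩
    show v ∈ (q K : Set V)
    by_cases hK : K ∈ D'
    · have hvL := hcov K ⟨K.2, hK⟩ v hvK ⟨B, B.2, hvB⟩
      exact hT.1.support_path_subset (hT.2.2 v) hvK hvL (P K) _
        (Walk.firstNotMem_mem_support D' _)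
    · rwa [hq_of_notMem K hK]

theorem AlphaAcyclic.sdiff_singleton_empty {E : Set (Set V)} (h : AlphaAcyclic E) :
    AlphaAcyclic (E \ {∅}) := by
  obtain hE | ⟨L, hL⟩ := (E \ {∅}).eq_empty_or_nonempty
  · exact hE ▸ alphaAcyclic_of_subsingleton Set.subsingleton_empty
  · exact h.sdiff hL fun A hA u hu _ => absurd (hA.2 ▸ hu : u ∈ (∅ : Set V)) id

theorem AlphaAcyclic.image_sdiff_singleton {F : Set (Set V)} {x : V} (h : AlphaAcyclic F)
    (hinj : F.InjOn (· \ {x})) : AlphaAcyclic ((· \ {x}) '' F) := by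
  obtain ⟨T, hT⟩ := h
  let f (K : F) : ↥((· \ {x}) '' F) := ⟨K \ {x}, K, K.2, rfl⟩
  refine ⟨T.map f, hT.map f (fun B => ?_) ?_ ?_⟩
  · have : Subsingleton (f ⁻¹' {B}) := ⟨fun K K' => Subtype.ext <| Subtype.ext <|
      hinj K.1.2 K'.1.2 <| congrArg Subtype.val (K.2.trans K'.2.symm)⟩
    exact .of_subsingleton
  · rintro ⟨_, K, hK, rfl⟩
    exact ⟨⟨K, hK⟩, rfl, Set.sdiff_subset⟩
  · rintro v K hvK ⟨⟨_, K', hK', rfl⟩, hvK'⟩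
    exact ⟨hvK, hvK'.2⟩

theorem removeVertex_eq_image_sdiff (F : Set (Set V)) (x : V) :
    removeVertex F x = (· \ {x}) '' F \ {∅} := by
  ext M
  simp only [removeVertex, Set.mem_ofPred_eq, Set.mem_sdiff, Set.mem_image, Set.mem_singleton_iff]
  grind

theorem AlphaAcyclic.removeVertex_of_injOn {F : Set (Set V)} {x : V} (h : AlphaAcyclic F)
    (hinj : F.InjOn (· \ {x})) : AlphaAcyclic (removeVertex F x) :=
  removeVertex_eq_image_sdiff F x ▸ (h.image_sdiff_singleton hinj).sdiff_singleton_empty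

theorem Set.injOn_sdiff_singleton {F : Set (Set V)} {x : V} (h : ∀ K ∈ F, x ∈ K → K \ {x} ∉ F) :
    F.InjOn (· \ {x}) := by
  intro K hK K' hK' heq
  simp only at heq
  by_cases hx : x ∈ K <;> by_cases hx' : x ∈ K'
  · rw [← Set.insert_sdiff_self_of_mem hx, heq, Set.insert_sdiff_self_of_mem hx']
  · rw [Set.sdiff_singleton_eq_self hx'] at heq
    exact absurd (heq ▸ hK') (h K hK hx)
  · rw [Set.sdiff_singleton_eq_self hx] at heq
    exact absurd (heq ▸ hK) (h K' hK' hx')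
  · rwa [Set.sdiff_singleton_eq_self hx, Set.sdiff_singleton_eq_self hx'] at heq

section Leaf

variable (Ep En : Set (Set V)) (x : V) (Rx : Set V)

/-- A hyperedge `N ∋ x` is not lifted when `N \ {x}` is itself a surviving hyperedge, so that
removing `x` stays injective. -/
def leafLift (S : Set (Set V)) : Set (Set V) :=
  {N | N ∈ En ∧ N \ {x} ∈ S ∧ (x ∈ N → N \ {x} ∉ (Ep ∪ En) \ leafSx Ep En Rx)}

theorem removeLeafPos_union_eq {S : Set (Set V)} (hS : S ⊆ removeLeafNeg Ep En x Rx) :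
    removeLeafPos Ep En x Rx ∪ S =
      removeVertex ((Ep ∪ leafLift Ep En x Rx S) \ leafSx Ep En Rx) x := by
  ext M
  constructor
  · rintro (⟨K, ⟨hKp, hKS⟩, rfl, hne⟩ | hM)
    · exact ⟨K, ⟨.inl hKp, hKS⟩, rfl, hne⟩
    obtain ⟨N, ⟨hNn, hNS⟩, rfl, hne⟩ := hS hM
    by_cases hlift : N ∈ leafLift Ep En x Rx S
    · exact ⟨N, ⟨.inr hlift, hNS⟩, rfl, hne⟩
    obtain ⟨hxN, hsurv⟩ : x ∈ N ∧ N \ {x} ∈ (Ep ∪ En) \ leafSx Ep En Rx := by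
      by_contra hcon
      exact hlift ⟨hNn, hM, fun hxN h => hcon ⟨hxN, h⟩⟩
    have hfree : (N \ {x}) \ {x} = N \ {x} := Set.sdiff_singleton_eq_self (by simp)
    refine ⟨N \ {x}, ⟨?_, hsurv.2⟩, hfree.symm, hne⟩
    rcases hsurv.1 with hp | hn
    · exact .inl hp
    · exact .inr ⟨hn, by rwa [hfree], fun h => (h.2 rfl).elim⟩
  · rintro ⟨K, ⟨hKp | hKl, hKS⟩, rfl, hne⟩
    · exact .inl ⟨K, ⟨hKp, hKS⟩, rfl, hne⟩
    · exact .inr hKl.2.1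

/-- Only the pivot among the positive hyperedges through `x` survives, and removing `x` from it
gives a hyperedge inside the pivot, which has been deleted. -/
theorem sdiff_singleton_notMem_leafLift (hxRx : x ∈ Rx) (hmax : ∀ R ∈ Ep, x ∈ R → R ⊆ Rx)
    (S : Set (Set V)) :
    ∀ K ∈ (Ep ∪ leafLift Ep En x Rx S) \ leafSx Ep En Rx, x ∈ K →
      K \ {x} ∉ (Ep ∪ leafLift Ep En x Rx S) \ leafSx Ep En Rx := by
  rintro K ⟨hKp | hKl, -⟩ hxK ⟨hmem, hnot⟩
  · refine hnot ⟨hmem.imp id fun h => h.1, fun h => ?_, Set.sdiff_subset.trans (hmax K hKp hxK)⟩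
    exact (h.symm ▸ hxRx : x ∈ K \ {x}).2 rfl
  · exact hKl.2.2 hxK ⟨hmem.imp id fun h => h.1, hnot⟩

end Leaf

/-- Removing a signed-leaf (deleting the hyperedges contained in its pivot and then
removing the vertex) preserves signed-acyclicity. -/
theorem signedAcyclic_removeLeaf (Ep En : Set (Set V)) (x : V) (Rx : Set V)
    (hpivot : IsPivot Ep En x Rx)
    (h : SignedAcyclic Ep En) :
    SignedAcyclic (removeLeafPos Ep En x Rx) (removeLeafNeg Ep En x Rx) := by
  obtain ⟨hRxEp, hxRx, hmax, -, -⟩ := hpivot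
  intro S hS
  rw [removeLeafPos_union_eq Ep En x Rx hS]
  have hlift : AlphaAcyclic (Ep ∪ leafLift Ep En x Rx S) := h _ fun N hN => hN.1
  have hRx : Rx ∈ (Ep ∪ leafLift Ep En x Rx S) \ leafSx Ep En Rx :=
    ⟨.inl hRxEp, fun hRx => hRx.2.1 rfl⟩
  refine AlphaAcyclic.removeVertex_of_injOn ?_
    (Set.injOn_sdiff_singleton (sdiff_singleton_notMem_leafLift Ep En x Rx hxRx hmax S))
  exact hlift.sdiff hRx fun A hA u hu _ => hA.2.2.2 hu
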